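/- arXiv:2003.11594 — 3 statements merged into one kernel-verified Lean document; each statement's English description precedes it below -/
import Mathlib

section
/- For every α ∈ Q((1/T)) that is not a rational function, there exist infinitely many pairs of polynomials p, q ∈ Q[T], q ≠ 0, with deg(α - p/q) ≤ -2 deg q - 1. -/
/-!
Siegel's lemma in its simplest form: the `n + 1` coefficients of a polynomial `q` with
`deg q ≤ n` can be chosen, not all zero, so that the `n` coefficients of `q α` at
`T⁻¹, …, T⁻ⁿ` vanish. Taking for `p` the polynomial part of `q α` then gives
`deg (q α - p) ≤ -n - 1`, hence `deg (α - p / q) ≤ -n - 1 - deg q ≤ -2 deg q - 1`.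
As `α` is not rational, `α - p / q ≠ 0`, and these degrees tend to `-∞` with `n`,
so infinitely many distinct pairs occur.
-/

noncomputable section
open scoped Classical

/-- `ℚ((1/T))`: formal Laurent series in `X = 1/T` over `ℚ`. The exponent `n` of `X`
corresponds to `T^(-n)`. -/
abbrev QLaurent := LaurentSeries ℚ

/-- The embedding of `ℚ[T]` into `ℚ((1/T))`, sending `T` to `X⁻¹ = single (-1) 1`. -/
noncomputable def polyToL : Polynomial ℚ →ₐ[ℚ] QLaurent :=
  Polynomial.aeval (HahnSeries.single (-1 : ℤ) (1 : ℚ))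

/-- The embedding of the rational functions `ℚ(T)` into `ℚ((1/T))`. -/
noncomputable def ratToL (r : RatFunc ℚ) : QLaurent := polyToL r.num / polyToL r.denom

/-- The degree (in `T`) of a formal Laurent series in `1/T`, with `deg 0 = ⊥`. -/
noncomputable def degL (α : QLaurent) : WithBot ℤ :=
  if α = 0 then ⊥ else ((-α.order : ℤ) : WithBot ℤ)

/-- Integer-valued degree in `T` (junk value `0` at `α = 0`). -/
noncomputable def degZ (α : QLaurent) : ℤ := -α.order

open Polynomial
open scoped nonZeroDivisors

section Laurent

variable (K : Type*) [Field K]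

-- `polyToL` is `polyToLaurent ℚ` by definition.
def polyToLaurent : K[X] →ₐ[K] LaurentSeries K :=
  aeval (HahnSeries.single (-1 : ℤ) (1 : K))

variable {K}

theorem polyToLaurent_monomial (i : ℕ) (a : K) :
    polyToLaurent K (monomial i a) = HahnSeries.single (-(i : ℤ)) a := by
  simp [polyToLaurent, aeval_monomial, LaurentSeries.algebraMap_apply]

theorem polyToLaurent_C (a : K) : polyToLaurent K (C a) = HahnSeries.C a := by
  simpa using polyToLaurent_monomial 0 a

theorem coeff_polyToLaurent (p : K[X]) (n : ℤ) :
    (polyToLaurent K p).coeff n = if n ≤ 0 then p.coeff (-n).toNat else 0 := by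
  induction p using Polynomial.induction_on' with
  | add f g hf hg =>
    simp only [map_add, HahnSeries.coeff_add, hf, hg, coeff_add]
    split_ifs <;> simp
  | monomial i a =>
    rw [polyToLaurent_monomial, HahnSeries.coeff_single, coeff_monomial]
    split_ifs <;> first | rfl | omega

theorem polyToLaurent_injective : Function.Injective (polyToLaurent K) := by
  intro p q h
  ext i
  simpa [coeff_polyToLaurent] using congrArg (HahnSeries.coeff · (-(i : ℤ))) h

theorem orderTop_polyToLaurent {q : K[X]} (hq : q ≠ 0) :
    (polyToLaurent K q).orderTop = ((-q.natDegree : ℤ) : WithTop ℤ) := by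
  apply le_antisymm
  · apply HahnSeries.orderTop_le_of_coeff_ne_zero
    simpa [coeff_polyToLaurent] using hq
  · refine HahnSeries.le_orderTop_iff_forall.2 fun j hj => ?_
    norm_cast at hj
    rw [coeff_polyToLaurent]
    split_ifs
    · exact coeff_eq_zero_of_natDegree_lt (by omega)
    · rfl

theorem exists_coeff_polyToLaurent_eq (β : LaurentSeries K) :
    ∃ p : K[X], ∀ k ≤ 0, (polyToLaurent K p).coeff k = β.coeff k := by
  refine ⟨∑ i ∈ Finset.range ((-β.order).toNat + 1), monomial i (β.coeff (-i)), fun k hk => ?_⟩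
  simp only [coeff_polyToLaurent, if_pos hk, finsetSum_coeff, coeff_monomial,
    Finset.sum_ite_eq', Finset.mem_range]
  split_ifs with h
  · congr 1; omega
  · exact (HahnSeries.coeff_eq_zero_of_lt_order (by omega)).symm

theorem exists_coeff_polyToLaurent_mul_eq_zero (α : LaurentSeries K) (n : ℕ) :
    ∃ q : K[X], q ≠ 0 ∧ q.natDegree ≤ n ∧
      ∀ k : ℤ, 0 < k → k ≤ n → (polyToLaurent K q * α).coeff k = 0 := by
  let f : degreeLT K (n + 1) →ₗ[K] Fin n → K :=
    { toFun := fun q k => (polyToLaurent K q * α).coeff (k + 1)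
      map_add' := fun p q => by ext k; simp [add_mul]
      map_smul' := fun c q => by
        ext k
        rw [Submodule.coe_smul, smul_eq_C_mul, map_mul, polyToLaurent_C, mul_assoc,
          HahnSeries.C_mul_eq_smul, HahnSeries.coeff_smul, smul_eq_mul]
        rfl }
  have hdim : Module.finrank K (Fin n → K) < Module.finrank K (degreeLT K (n + 1)) := by
    simp [(degreeLTEquiv K (n + 1)).finrank_eq]
  obtain ⟨⟨q, hq⟩, hker, hq_ne⟩ :=
    Submodule.exists_mem_ne_zero_of_ne_bot (LinearMap.ker_ne_bot_of_finrank_lt (f := f) hdim)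
  have hq0 : q ≠ 0 := by simpa using hq_ne
  refine ⟨q, hq0, ?_, fun k hk hkn => ?_⟩
  · rw [mem_degreeLT] at hq
    exact Nat.lt_succ_iff.1 ((natDegree_lt_iff_degree_lt hq0).2 (by exact_mod_cast hq))
  · have : (polyToLaurent K q * α).coeff (((k - 1).toNat : ℤ) + 1) = 0 :=
      congrFun (LinearMap.mem_ker.1 hker) ⟨(k - 1).toNat, by omega⟩
    rwa [show ((k - 1).toNat : ℤ) + 1 = k by omega] at this

theorem exists_le_orderTop_sub_div (α : LaurentSeries K) (n : ℕ) :
    ∃ p q : K[X], q ≠ 0 ∧ q.natDegree ≤ n ∧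
      (((n + 1 + q.natDegree : ℕ) : ℤ) : WithTop ℤ) ≤
        (α - polyToLaurent K p / polyToLaurent K q).orderTop := by
  obtain ⟨q, hq0, hqn, hvanish⟩ := exists_coeff_polyToLaurent_mul_eq_zero α n
  obtain ⟨p, hp⟩ := exists_coeff_polyToLaurent_eq (polyToLaurent K q * α)
  refine ⟨p, q, hq0, hqn, ?_⟩
  have hrem : (((n + 1 : ℕ) : ℤ) : WithTop ℤ) ≤
      (polyToLaurent K q * α - polyToLaurent K p).orderTop := by
    refine HahnSeries.le_orderTop_iff_forall.2 fun j hj => ?_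
    norm_cast at hj
    rw [HahnSeries.coeff_sub]
    rcases le_or_gt j 0 with hj0 | hj0
    · rw [hp j hj0, sub_self]
    · rw [hvanish j hj0 (by omega), coeff_polyToLaurent, if_neg (by omega), sub_self]
  have hQ : polyToLaurent K q ≠ 0 := (map_ne_zero_iff _ polyToLaurent_injective).2 hq0
  rw [← div_mul_cancel₀ (polyToLaurent K q * α - polyToLaurent K p) hQ, sub_div,
    mul_div_cancel_left₀ α hQ, HahnSeries.orderTop_mul, orderTop_polyToLaurent hq0] at hrem
  revert hrem
  cases (α - polyToLaurent K p / polyToLaurent K q).orderTop with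
  | top => simp
  | coe a => norm_cast; omega

end Laurent

theorem polyToL_div_mem_range_ratToL (p q : ℚ[X]) :
    polyToL p / polyToL q ∈ Set.range ratToL := by
  have hφ : ℚ[X]⁰ ≤ QLaurent⁰.comap polyToL :=
    nonZeroDivisors_le_comap_nonZeroDivisors_of_injective _ polyToLaurent_injective
  have hratToL (r : RatFunc ℚ) : ratToL r = RatFunc.liftAlgHom polyToL hφ r := by
    conv_rhs => rw [← RatFunc.num_div_denom r]
    rw [RatFunc.liftAlgHom_apply_div]
    rfl
  exact ⟨algebraMap _ _ p / algebraMap _ _ q, by rw [hratToL, RatFunc.liftAlgHom_apply_div]⟩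

/-- Dirichlet's theorem for `ℚ((1/T))`: for every `α ∈ ℚ((1/T))` which is not a
rational function there are infinitely many pairs of polynomials `(p, q)`,
`q ≠ 0`, with `deg (α - p/q) ≤ -2 deg q - 1`. -/
theorem dirichlet_approximation (α : QLaurent) (hirr : α ∉ Set.range ratToL) :
    {pr : Polynomial ℚ × Polynomial ℚ | pr.2 ≠ 0 ∧
      degL (α - polyToL pr.1 / polyToL pr.2)
        ≤ ((-2 * (pr.2.natDegree : ℤ) - 1 : ℤ) : WithBot ℤ)}.Infinite := by
  have hne (p q : ℚ[X]) : α - polyToL p / polyToL q ≠ 0 := fun h =>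
    hirr (sub_eq_zero.1 h ▸ polyToL_div_mem_range_ratToL p q)
  refine Set.Infinite.of_image (fun pr => (α - polyToL pr.1 / polyToL pr.2).order)
    (Set.infinite_of_not_bddAbove ?_)
  rintro ⟨b, hb⟩
  obtain ⟨p, q, hq0, hqn, hord⟩ := exists_le_orderTop_sub_div α b.toNat
  change _ ≤ (α - polyToL p / polyToL q).orderTop at hord
  rw [← HahnSeries.order_eq_orderTop_of_ne_zero (hne p q)] at hord
  norm_cast at hord
  have hdeg : degL (α - polyToL p / polyToL q) ≤
      ((-2 * (q.natDegree : ℤ) - 1 : ℤ) : WithBot ℤ) := by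
    rw [degL, if_neg (hne p q)]
    exact WithBot.coe_le_coe.2 (by omega)
  have : (α - polyToL p / polyToL q).order ≤ b := hb ⟨(p, q), ⟨hq0, hdeg⟩, rfl⟩
  omega

end
end

section
/- For α ∈ Q((1/T)) \ Q(T) with continued fraction [a_0, a_1, ...], the Lagrange constant l(α) — the greatest integer k such that deg(α - p/q) ≤ -2 deg q - k holds for infinitely many p/q ∈ Q(T) — equals limsup_{h→∞} deg a_h. -/
/-!
The partial quotients `a_h`, `h ≥ 1`, have degree `d_h ≥ 1`. The convergent denominators
therefore have `deg Q_{n+1} = S_n := d_1 + ⋯ + d_n`, and the errors `θ_n = Q_n α - P_n`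
satisfy `θ_{n+1} α_{n+1} = -θ_n`, so `deg θ_n = -S_n` and
`deg (α - P_{n+1} / Q_{n+1}) = -2 deg Q_{n+1} - d_{n+1}`.
Conversely (Legendre), every `p / q` with `deg (α - p / q) < -2 deg q` is a convergent.
So for `k ≥ 1` the approximations of order `k` are exactly the convergents with `d_{n+1} ≥ k`;
they are infinitely many iff `d_h ≥ k` infinitely often, i.e. iff `k ≤ limsup d_h`.
-/

noncomputable section
open scoped Classical

/-- The polynomial part `⌊α⌋` of `α ∈ ℚ((1/T))`: truncation to the terms of
nonnegative degree in `T` (nonpositive exponent of `X = 1/T`). -/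
noncomputable def polyPart (α : QLaurent) : QLaurent where
  coeff n := if n ≤ 0 then α.coeff n else 0
  isPWO_support' := α.isPWO_support'.mono (by
    intro n hn
    simp only [Function.mem_support, ne_eq] at hn ⊢
    intro h
    apply hn
    split_ifs <;> simp [h])

/-- The fractional part `{α} = α - ⌊α⌋`. -/
noncomputable def fracPart (α : QLaurent) : QLaurent := α - polyPart α

/-- The complete quotients `α_n` of the continued fraction algorithm:
`α_0 = α`, `α_{n+1} = 1/{α_n}`. -/
noncomputable def cfA (α : QLaurent) : ℕ → QLaurent
  | 0 => α
  | n + 1 => (fracPart (cfA α n))⁻¹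

/-- The partial quotients `a_n = ⌊α_n⌋` of the continued fraction of `α`. -/
noncomputable def pq (α : QLaurent) (n : ℕ) : QLaurent := polyPart (cfA α n)

open Filter Polynomial

theorem HahnSeries.order_eq_of_coeff {Γ R : Type*} [Zero Γ] [LinearOrder Γ] [Zero R]
    {x : HahnSeries Γ R} {g : Γ} (hg : x.coeff g ≠ 0) (hlt : ∀ i < g, x.coeff i = 0) :
    x.order = g :=
  (order_le_of_coeff_ne_zero hg).antisymm <| not_lt.1 fun h =>
    (coeff_order_eq_zero.not.2 (ne_zero_of_coeff_ne_zero hg)) (hlt _ h)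

@[simp] theorem degZ_one : degZ 1 = 0 := by simp [degZ]

@[simp] theorem degZ_neg (x : QLaurent) : degZ (-x) = degZ x := by simp [degZ]

theorem degZ_mul {x y : QLaurent} (hx : x ≠ 0) (hy : y ≠ 0) :
    degZ (x * y) = degZ x + degZ y := by
  simp only [degZ, HahnSeries.order_mul hx hy, neg_add]

theorem degZ_inv {x : QLaurent} (hx : x ≠ 0) : degZ x⁻¹ = -degZ x := by
  have := degZ_mul hx (inv_ne_zero hx)
  rw [mul_inv_cancel₀ hx, degZ_one] at this
  linarith

theorem degZ_div {x y : QLaurent} (hx : x ≠ 0) (hy : y ≠ 0) :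
    degZ (x / y) = degZ x - degZ y := by
  rw [div_eq_mul_inv, degZ_mul hx (inv_ne_zero hy), degZ_inv hy, sub_eq_add_neg]

theorem degZ_add_le {x y : QLaurent} (hxy : x + y ≠ 0) :
    degZ (x + y) ≤ max (degZ x) (degZ y) := by
  have := HahnSeries.min_order_le_order_add hxy
  simp only [degZ, le_max_iff, neg_le_neg_iff, ← min_le_iff, this]

theorem degZ_add_of_lt {x y : QLaurent} (hx : x ≠ 0) (h : degZ y < degZ x) :
    x + y ≠ 0 ∧ degZ (x + y) = degZ x := by
  have hlt : x.orderTop < y.orderTop := by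
    rcases eq_or_ne y 0 with rfl | hy
    · simpa using hx
    rw [← HahnSeries.order_eq_orderTop_of_ne_zero hx,
      ← HahnSeries.order_eq_orderTop_of_ne_zero hy, WithTop.coe_lt_coe]
    simp only [degZ] at h
    omega
  have hsum := HahnSeries.orderTop_add_eq_left hlt
  have hne : x + y ≠ 0 := fun h0 => hx (by simpa [h0, eq_comm] using hsum)
  refine ⟨hne, ?_⟩
  rw [← HahnSeries.order_eq_orderTop_of_ne_zero hne,
    ← HahnSeries.order_eq_orderTop_of_ne_zero hx, WithTop.coe_inj] at hsum
  simp [degZ, hsum]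

theorem polyToL_monomial (i : ℕ) (c : ℚ) :
    polyToL (monomial i c) = HahnSeries.single (-(i : ℤ)) c := by
  have hpow : ∀ i : ℕ, (HahnSeries.single (-1 : ℤ) (1 : ℚ)) ^ i =
      HahnSeries.single (-(i : ℤ)) 1 := by
    intro i
    induction i with
    | zero => simp
    | succ n ih =>
      rw [pow_succ, ih, HahnSeries.single_mul_single, mul_one]
      push_cast; ring_nf
  rw [← C_mul_X_pow_eq_monomial, polyToL, map_mul, map_pow, aeval_X, aeval_C, hpow,
    HahnSeries.algebraMap_apply', PowerSeries.algebraMap_eq, HahnSeries.ofPowerSeries_C,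
    HahnSeries.C_apply, HahnSeries.single_mul_single, zero_add, mul_one]

theorem polyToL_coeff (p : ℚ[X]) (n : ℤ) :
    (polyToL p).coeff n = if n ≤ 0 then p.coeff (-n).toNat else 0 := by
  induction p using Polynomial.induction_on' with
  | add f g hf hg =>
    simp only [map_add, HahnSeries.coeff_add, hf, hg, coeff_add]
    split_ifs <;> simp
  | monomial m c =>
    rw [polyToL_monomial, HahnSeries.coeff_single, coeff_monomial]
    split_ifs <;> first | rfl | omega

theorem polyToL_coeff_neg_natCast (p : ℚ[X]) (i : ℕ) :
    (polyToL p).coeff (-(i : ℤ)) = p.coeff i := by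
  simp [polyToL_coeff]

theorem polyToL_injective : Function.Injective polyToL := fun p q h => by
  ext i
  rw [← polyToL_coeff_neg_natCast, ← polyToL_coeff_neg_natCast, h]

theorem polyToL_ne_zero {p : ℚ[X]} (hp : p ≠ 0) : polyToL p ≠ 0 :=
  (map_ne_zero_iff _ polyToL_injective).2 hp

theorem degZ_polyToL {p : ℚ[X]} (hp : p ≠ 0) : degZ (polyToL p) = p.natDegree := by
  suffices (polyToL p).order = -(p.natDegree : ℤ) by simp [degZ, this]
  refine HahnSeries.order_eq_of_coeff ?_ fun n hn => ?_
  · rw [polyToL_coeff_neg_natCast]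
    exact leadingCoeff_ne_zero.2 hp
  · rw [polyToL_coeff]
    split_ifs
    · exact coeff_eq_zero_of_natDegree_lt (by omega)
    · rfl

theorem polyPart_coeff (x : QLaurent) (n : ℤ) :
    (polyPart x).coeff n = if n ≤ 0 then x.coeff n else 0 := rfl

def toPoly (x : QLaurent) : ℚ[X] :=
  ∑ i ∈ Finset.range (1 - x.order).toNat, monomial i (x.coeff (-(i : ℤ)))

theorem polyToL_toPoly (x : QLaurent) : polyToL (toPoly x) = polyPart x := by
  ext n
  rw [polyToL_coeff, polyPart_coeff, toPoly, finsetSum_coeff]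
  simp only [coeff_monomial, Finset.sum_ite_eq', Finset.mem_range]
  split_ifs with hn hlt
  · congr 1; omega
  · exact (HahnSeries.coeff_eq_zero_of_lt_order (by omega)).symm
  · rfl

def ratEmb : RatFunc ℚ →+* QLaurent :=
  IsFractionRing.lift (g := polyToL.toRingHom) polyToL_injective

theorem ratEmb_algebraMap (p : ℚ[X]) : ratEmb (algebraMap ℚ[X] (RatFunc ℚ) p) = polyToL p :=
  IsFractionRing.lift_algebraMap _ _

theorem ratToL_eq_ratEmb : ratToL = ratEmb := funext fun r => by
  rw [ratToL, ← ratEmb_algebraMap, ← ratEmb_algebraMap, ← map_div₀, RatFunc.num_div_denom]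

theorem ratToL_injective : Function.Injective ratToL :=
  ratToL_eq_ratEmb ▸ ratEmb.injective

theorem polyPart_mem_fieldRange_ratEmb (x : QLaurent) : polyPart x ∈ ratEmb.fieldRange :=
  ⟨_, (ratEmb_algebraMap _).trans (polyToL_toPoly x)⟩

theorem fracPart_coeff_of_nonpos (x : QLaurent) {n : ℤ} (hn : n ≤ 0) :
    (fracPart x).coeff n = 0 := by
  rw [fracPart, HahnSeries.coeff_sub, polyPart_coeff, if_pos hn, sub_self]

theorem fracPart_order_pos {x : QLaurent} (hx : fracPart x ≠ 0) : 0 < (fracPart x).order :=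
  not_le.1 fun h => hx (HahnSeries.coeff_order_eq_zero.1 (fracPart_coeff_of_nonpos x h))

theorem polyPart_ne_zero_and_degZ {x : QLaurent} (hx : x ≠ 0) (h : 0 ≤ degZ x) :
    polyPart x ≠ 0 ∧ degZ (polyPart x) = degZ x := by
  have hord : x.order ≤ 0 := by simp only [degZ] at h; omega
  have hc : (polyPart x).coeff x.order ≠ 0 := by
    rw [polyPart_coeff, if_pos hord]
    exact HahnSeries.coeff_order_eq_zero.not.2 hx
  refine ⟨HahnSeries.ne_zero_of_coeff_ne_zero hc, ?_⟩
  rw [degZ, degZ, HahnSeries.order_eq_of_coeff hc fun n hn => ?_]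
  rw [polyPart_coeff, HahnSeries.coeff_eq_zero_of_lt_order hn, ite_self]

section CompleteQuotients

variable (α : QLaurent)

theorem cfA_succ (n : ℕ) : cfA α (n + 1) = (fracPart (cfA α n))⁻¹ := rfl

theorem cfA_eq_pq_add_inv (n : ℕ) : cfA α n = pq α n + (cfA α (n + 1))⁻¹ := by
  rw [cfA_succ, inv_inv, pq, fracPart, add_sub_cancel]

theorem mem_of_cfA_mem {K : Subfield QLaurent} (hK : ∀ x, polyPart x ∈ K) {n : ℕ}
    (hn : cfA α n ∈ K) : α ∈ K := by
  induction n with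
  | zero => exact hn
  | succ n ih => exact ih (cfA_eq_pq_add_inv α n ▸ K.add_mem (hK _) (K.inv_mem hn))

variable {α} (hirr : α ∉ Set.range ratToL)
include hirr

theorem fracPart_cfA_ne_zero (n : ℕ) : fracPart (cfA α n) ≠ 0 := fun h => hirr <| by
  have hpoly : cfA α n = polyPart (cfA α n) := sub_eq_zero.1 h
  rw [ratToL_eq_ratEmb]
  refine mem_of_cfA_mem α polyPart_mem_fieldRange_ratEmb (n := n) ?_
  rw [hpoly]
  exact polyPart_mem_fieldRange_ratEmb _

theorem cfA_succ_ne_zero (n : ℕ) : cfA α (n + 1) ≠ 0 :=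
  inv_ne_zero (fracPart_cfA_ne_zero hirr n)

theorem one_le_degZ_cfA_succ (n : ℕ) : 1 ≤ degZ (cfA α (n + 1)) := by
  rw [cfA_succ, degZ_inv (fracPart_cfA_ne_zero hirr n), degZ, neg_neg]
  exact fracPart_order_pos (fracPart_cfA_ne_zero hirr n)

theorem pq_succ_ne_zero (n : ℕ) : pq α (n + 1) ≠ 0 :=
  (polyPart_ne_zero_and_degZ (cfA_succ_ne_zero hirr n)
    (by linarith [one_le_degZ_cfA_succ hirr n])).1

theorem degZ_pq_succ (n : ℕ) : degZ (pq α (n + 1)) = degZ (cfA α (n + 1)) :=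
  (polyPart_ne_zero_and_degZ (cfA_succ_ne_zero hirr n)
    (by linarith [one_le_degZ_cfA_succ hirr n])).2

theorem one_le_degZ_pq_succ (n : ℕ) : 1 ≤ degZ (pq α (n + 1)) :=
  degZ_pq_succ hirr n ▸ one_le_degZ_cfA_succ hirr n

end CompleteQuotients

section Convergents

variable {R S : Type*} [CommRing R] [CommRing S] (a : ℕ → R)

/-- `contNum a (n + 1) / contDen a (n + 1)` is `[a 0; a 1, …, a n]`; index `0` holds the seeds
`1` and `0` of the recursion. -/
def contNum : ℕ → R
  | 0 => 1
  | 1 => a 0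
  | n + 2 => a (n + 1) * contNum (n + 1) + contNum n

def contDen : ℕ → R
  | 0 => 0
  | 1 => 1
  | n + 2 => a (n + 1) * contDen (n + 1) + contDen n

theorem contNum_mul_contDen_sub (n : ℕ) :
    contNum a (n + 1) * contDen a n - contNum a n * contDen a (n + 1) = (-1) ^ (n + 1) := by
  induction n with
  | zero => simp [contNum, contDen]
  | succ n ih =>
    rw [contNum, contDen, pow_succ]
    linear_combination -ih

theorem isCoprime_contNum_contDen (n : ℕ) :
    IsCoprime (contNum a (n + 1)) (contDen a (n + 1)) := by
  have hsq : (-1 : R) ^ (n + 1) * (-1) ^ (n + 1) = 1 := by rw [← mul_pow]; norm_num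
  refine ⟨(-1) ^ (n + 1) * contDen a n, -((-1) ^ (n + 1) * contNum a n), ?_⟩
  linear_combination (-1 : R) ^ (n + 1) * contNum_mul_contDen_sub a n + hsq

theorem map_contNum (f : R →+* S) (n : ℕ) : f (contNum a n) = contNum (fun i => f (a i)) n := by
  fun_induction contNum a n <;> simp_all [contNum]

theorem map_contDen (f : R →+* S) (n : ℕ) : f (contDen a n) = contDen (fun i => f (a i)) n := by
  fun_induction contDen a n <;> simp_all [contDen]

def contErr (x : R) (n : ℕ) : R := x * contDen a n - contNum a n

end Convergents

theorem contErr_succ_mul {K : Type*} [Field K] {a β : ℕ → K}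
    (hβ : ∀ n, β n = a n + (β (n + 1))⁻¹) (hne : ∀ n, β (n + 1) ≠ 0) (n : ℕ) :
    contErr a (β 0) (n + 1) * β (n + 1) = -contErr a (β 0) n := by
  unfold contErr
  induction n with
  | zero =>
    simp only [contDen, contNum, hβ 0]
    field_simp [hne 0]
    ring
  | succ n ih =>
    have hinv : β (n + 2) * (β (n + 2))⁻¹ = 1 := mul_inv_cancel₀ (hne (n + 1))
    rw [hβ (n + 1)] at ih
    rw [contDen, contNum]
    linear_combination ih * β (n + 2) - (β 0 * contDen a (n + 1) - contNum a (n + 1)) * hinv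

theorem RatFunc.natDegree_denom_div {K : Type*} [Field K] {p q : K[X]} (hpq : IsCoprime p q)
    (hq : q ≠ 0) :
    (RatFunc.denom (algebraMap K[X] (RatFunc K) p / algebraMap K[X] (RatFunc K) q)).natDegree =
      q.natDegree := by
  set r := algebraMap K[X] (RatFunc K) p / algebraMap K[X] (RatFunc K) q
  have hcross : r.num * q = p * r.denom := (RatFunc.num_mul_eq_mul_denom_iff hq).2 rfl
  have hdvd : q ∣ r.denom :=
    hpq.symm.dvd_of_dvd_mul_left ⟨r.num, by rw [← hcross, mul_comm]⟩
  exact (natDegree_le_of_dvd (RatFunc.denom_div_dvd p q) hq).antisymm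
    (natDegree_le_of_dvd hdvd r.denom_ne_zero)

section ContinuedFraction

variable (α : QLaurent)

def cfNum (n : ℕ) : QLaurent := contNum (pq α) n

def cfDen (n : ℕ) : QLaurent := contDen (pq α) n

def cfErr (n : ℕ) : QLaurent := contErr (pq α) α n

theorem cfErr_eq (n : ℕ) : cfErr α n = α * cfDen α n - cfNum α n := rfl

def degSum (n : ℕ) : ℤ := ∑ m ∈ Finset.range n, degZ (pq α (m + 1))

theorem degSum_succ (n : ℕ) : degSum α (n + 1) = degSum α n + degZ (pq α (n + 1)) :=
  Finset.sum_range_succ _ _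

def pqPoly (n : ℕ) : ℚ[X] := toPoly (cfA α n)

theorem polyToL_pqPoly (n : ℕ) : polyToL (pqPoly α n) = pq α n := polyToL_toPoly _

theorem polyToL_contNum_pqPoly (n : ℕ) : polyToL (contNum (pqPoly α) n) = cfNum α n := by
  rw [← AlgHom.coe_toRingHom, map_contNum]
  simp only [AlgHom.coe_toRingHom, polyToL_pqPoly, cfNum]

theorem polyToL_contDen_pqPoly (n : ℕ) : polyToL (contDen (pqPoly α) n) = cfDen α n := by
  rw [← AlgHom.coe_toRingHom, map_contDen]
  simp only [AlgHom.coe_toRingHom, polyToL_pqPoly, cfDen]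

def convergent (n : ℕ) : RatFunc ℚ :=
  algebraMap ℚ[X] (RatFunc ℚ) (contNum (pqPoly α) (n + 1)) /
    algebraMap ℚ[X] (RatFunc ℚ) (contDen (pqPoly α) (n + 1))

theorem ratToL_convergent (n : ℕ) :
    ratToL (convergent α n) = cfNum α (n + 1) / cfDen α (n + 1) := by
  rw [ratToL_eq_ratEmb, convergent, map_div₀, ratEmb_algebraMap, ratEmb_algebraMap,
    polyToL_contNum_pqPoly, polyToL_contDen_pqPoly]

variable {α} (hirr : α ∉ Set.range ratToL)
include hirr

theorem degSum_strictMono : StrictMono (degSum α) :=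
  strictMono_nat_of_lt_succ fun n => by
    rw [degSum_succ]
    linarith [one_le_degZ_pq_succ hirr n]

theorem cfErr_succ_mul (n : ℕ) : cfErr α (n + 1) * cfA α (n + 1) = -cfErr α n :=
  contErr_succ_mul (cfA_eq_pq_add_inv α) (cfA_succ_ne_zero hirr) n

theorem cfDen_succ_ne_zero_and_degZ (n : ℕ) :
    cfDen α (n + 1) ≠ 0 ∧ degZ (cfDen α (n + 1)) = degSum α n := by
  induction n using Nat.twoStepInduction with
  | zero => simp [cfDen, contDen, degSum]
  | one =>
    simpa [cfDen, contDen, degSum] using pq_succ_ne_zero hirr 0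
  | more n ih₀ ih₁ =>
    have hpq := pq_succ_ne_zero hirr (n + 1)
    have hlead : degZ (cfDen α (n + 1)) < degZ (pq α (n + 2) * cfDen α (n + 2)) := by
      rw [degZ_mul hpq ih₁.1, ih₁.2, ih₀.2, degSum_succ]
      linarith [one_le_degZ_pq_succ hirr n, one_le_degZ_pq_succ hirr (n + 1)]
    have hrec : cfDen α (n + 2 + 1) = pq α (n + 2) * cfDen α (n + 2) + cfDen α (n + 1) := rfl
    obtain ⟨hne, hdeg⟩ := degZ_add_of_lt (mul_ne_zero hpq ih₁.1) hlead
    rw [hrec, hdeg, degZ_mul hpq ih₁.1, ih₁.2, degSum_succ α (n + 1), add_comm (degSum α _)]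
    exact ⟨hne, rfl⟩

theorem cfErr_ne_zero_and_degZ (n : ℕ) :
    cfErr α n ≠ 0 ∧ degZ (cfErr α n) = -degSum α n := by
  induction n with
  | zero => simp [cfErr_eq, cfDen, cfNum, contDen, contNum, degSum]
  | succ n ih =>
    have hrec := cfErr_succ_mul hirr n
    have hne : cfErr α (n + 1) ≠ 0 := fun h => ih.1 (by simpa [h] using hrec.symm)
    refine ⟨hne, ?_⟩
    have := congrArg degZ hrec
    rw [degZ_mul hne (cfA_succ_ne_zero hirr n), degZ_neg, ih.2, ← degZ_pq_succ hirr n] at this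
    rw [degSum_succ]
    linarith

end ContinuedFraction

theorem StrictMono.exists_apply_le_lt_apply_succ {f : ℕ → ℤ} (hf : StrictMono f) {m : ℤ}
    (h0 : f 0 ≤ m) : ∃ n, f n ≤ m ∧ m < f (n + 1) := by
  have hgrowth : ∀ n : ℕ, f 0 + n ≤ f n := fun n => by
    induction n with
    | zero => simp
    | succ n ih => push_cast; linarith [hf (Nat.lt_succ_self n)]
  have hex : ∃ n, m < f (n + 1) := ⟨(m - f 0).toNat, by
    have := hgrowth ((m - f 0).toNat + 1)
    push_cast at this
    linarith [Int.self_le_toNat (m - f 0)]⟩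
  refine ⟨Nat.find hex, ?_, Nat.find_spec hex⟩
  rcases Nat.eq_zero_or_pos (Nat.find hex) with h | h
  · rwa [h]
  · have := Nat.find_min hex (Nat.sub_one_lt_of_lt h)
    rwa [Nat.sub_add_cancel h, not_lt] at this

section Approximation

variable {α : QLaurent} (hirr : α ∉ Set.range ratToL)
include hirr

theorem natDegree_denom_convergent (n : ℕ) :
    ((convergent α n).denom.natDegree : ℤ) = degSum α n := by
  obtain ⟨hne, hdeg⟩ := cfDen_succ_ne_zero_and_degZ hirr n
  rw [← polyToL_contDen_pqPoly] at hne hdeg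
  have hQ : contDen (pqPoly α) (n + 1) ≠ 0 := fun h => hne (by rw [h, map_zero])
  rw [convergent, RatFunc.natDegree_denom_div (isCoprime_contNum_contDen _ n) hQ, ← hdeg,
    degZ_polyToL hQ]

theorem degZ_sub_convergent (n : ℕ) :
    α - ratToL (convergent α n) ≠ 0 ∧
      degZ (α - ratToL (convergent α n)) = -2 * degSum α n - degZ (pq α (n + 1)) := by
  obtain ⟨hQ, hQdeg⟩ := cfDen_succ_ne_zero_and_degZ hirr n
  obtain ⟨hθ, hθdeg⟩ := cfErr_ne_zero_and_degZ hirr (n + 1)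
  have hdiff : α - ratToL (convergent α n) = cfErr α (n + 1) / cfDen α (n + 1) := by
    rw [ratToL_convergent, cfErr_eq]
    field_simp
  rw [hdiff, degZ_div hθ hQ, hθdeg, hQdeg, degSum_succ]
  exact ⟨div_ne_zero hθ hQ, by ring⟩

theorem convergent_injective : Function.Injective (convergent α) := fun m n h =>
  (degSum_strictMono hirr).injective <| by
    rw [← natDegree_denom_convergent hirr, h, natDegree_denom_convergent hirr]

/-- Legendre: for `deg Q_{n+1} ≤ deg q < deg Q_{n+2}` the polynomial
`p Q_{n+1} - q P_{n+1} = q θ_{n+1} - Q_{n+1} (q α - p)` has negative degree, so it vanishes. -/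
theorem exists_polyToL_mul_cfDen_eq {p q : ℚ[X]} (hq : q ≠ 0)
    (h : degZ (α * polyToL q - polyToL p) < -q.natDegree) :
    ∃ n, polyToL p * cfDen α (n + 1) = polyToL q * cfNum α (n + 1) := by
  obtain ⟨n, hlo, hhi⟩ := (degSum_strictMono hirr).exists_apply_le_lt_apply_succ
    (m := q.natDegree) (by simp [degSum])
  refine ⟨n, sub_eq_zero.1 (not_not.1 fun hne => ?_)⟩
  set δ := α * polyToL q - polyToL p
  have hq' := polyToL_ne_zero hq
  have hδ : δ ≠ 0 := fun h0 => hirr ⟨algebraMap ℚ[X] (RatFunc ℚ) p / algebraMap _ _ q, by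
    rw [ratToL_eq_ratEmb, map_div₀, ratEmb_algebraMap, ratEmb_algebraMap, div_eq_iff hq',
      ← sub_eq_zero.1 h0]⟩
  obtain ⟨hQ, hQdeg⟩ := cfDen_succ_ne_zero_and_degZ hirr n
  obtain ⟨hθ, hθdeg⟩ := cfErr_ne_zero_and_degZ hirr (n + 1)
  have hdecomp : polyToL p * cfDen α (n + 1) - polyToL q * cfNum α (n + 1) =
      polyToL q * cfErr α (n + 1) + -(cfDen α (n + 1) * δ) := by
    rw [cfErr_eq]; ring
  have hnonneg : 0 ≤ degZ (polyToL p * cfDen α (n + 1) - polyToL q * cfNum α (n + 1)) := by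
    rw [← polyToL_contDen_pqPoly, ← polyToL_contNum_pqPoly, ← map_mul, ← map_mul,
      ← map_sub] at hne ⊢
    rw [degZ_polyToL fun h0 => hne (by rw [h0, map_zero])]
    positivity
  have hneg : degZ (polyToL q * cfErr α (n + 1) + -(cfDen α (n + 1) * δ)) < 0 := by
    refine (degZ_add_le (hdecomp ▸ hne)).trans_lt (max_lt ?_ ?_)
    · rw [degZ_mul hq' hθ, degZ_polyToL hq, hθdeg]
      linarith
    · rw [degZ_neg, degZ_mul hQ hδ, hQdeg]
      linarith
  exact hneg.not_ge (hdecomp ▸ hnonneg)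

theorem exists_eq_convergent_of_degZ_lt {r : RatFunc ℚ}
    (h : degZ (α - ratToL r) < -2 * r.denom.natDegree) : ∃ n, r = convergent α n := by
  have hq := polyToL_ne_zero r.denom_ne_zero
  have hδ : α - ratToL r ≠ 0 := fun h0 => hirr ⟨r, (sub_eq_zero.1 h0).symm⟩
  have hfactor : α * polyToL r.denom - polyToL r.num = (α - ratToL r) * polyToL r.denom := by
    rw [ratToL, sub_mul, div_mul_cancel₀ _ hq]
  obtain ⟨n, hn⟩ := exists_polyToL_mul_cfDen_eq hirr r.denom_ne_zero <| by
    rw [hfactor, degZ_mul hδ hq, degZ_polyToL r.denom_ne_zero]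
    linarith
  refine ⟨n, ratToL_injective ?_⟩
  rw [ratToL_convergent, ratToL, div_eq_div_iff hq (cfDen_succ_ne_zero_and_degZ hirr n).1, hn,
    mul_comm]

end Approximation

theorem Int.isGreatest_frequently_le_limsup {ι : Type*} {l : Filter ι} {u : ι → ℤ}
    (hc : l.IsCoboundedUnder (· ≤ ·) u) (hb : l.IsBoundedUnder (· ≤ ·) u) :
    IsGreatest {k | ∃ᶠ i in l, k ≤ u i} (l.limsup u) :=
  ⟨(frequently_lt_of_lt_limsup hc (sub_one_lt _)).mono fun _ => Int.sub_one_lt_iff.1,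
    fun _ hk => le_limsup_of_frequently_le hk hb⟩

def approxSet (α : QLaurent) (k : ℤ) : Set (RatFunc ℚ) :=
  {r | degL (α - ratToL r) ≤ ((-2 * (r.denom.natDegree : ℤ) - k : ℤ) : WithBot ℤ)}

theorem degL_le_coe_iff {x : QLaurent} (hx : x ≠ 0) (c : ℤ) :
    degL x ≤ (c : WithBot ℤ) ↔ degZ x ≤ c := by
  rw [degL, if_neg hx, WithBot.coe_le_coe, degZ]

section LagrangeConstant

variable {α : QLaurent} (hirr : α ∉ Set.range ratToL)
include hirr

theorem convergent_mem_approxSet {k : ℤ} {n : ℕ} (hk : k ≤ degZ (pq α (n + 1))) :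
    convergent α n ∈ approxSet α k := by
  obtain ⟨hne, hdeg⟩ := degZ_sub_convergent hirr n
  rw [approxSet, Set.mem_ofPred_eq, degL_le_coe_iff hne, hdeg, natDegree_denom_convergent hirr]
  linarith

theorem approxSet_subset_image_convergent {k : ℤ} (hk : 1 ≤ k) :
    approxSet α k ⊆ convergent α '' {n | k ≤ degZ (pq α (n + 1))} := by
  intro r hr
  have hne : α - ratToL r ≠ 0 := fun h0 => hirr ⟨r, (sub_eq_zero.1 h0).symm⟩
  rw [approxSet, Set.mem_ofPred_eq, degL_le_coe_iff hne] at hr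
  obtain ⟨n, rfl⟩ := exists_eq_convergent_of_degZ_lt hirr (by linarith)
  refine ⟨n, ?_, rfl⟩
  rw [(degZ_sub_convergent hirr n).2, natDegree_denom_convergent hirr] at hr
  simp only [Set.mem_ofPred_eq]
  linarith

theorem approxSet_infinite_iff (k : ℤ) :
    (approxSet α k).Infinite ↔ ∃ᶠ n in atTop, k ≤ degZ (pq α n) := by
  rw [← map_add_atTop_eq_nat 1, frequently_map, Nat.frequently_atTop_iff_infinite]
  constructor
  · intro hinf
    rcases le_or_gt k 1 with hk | hk
    · exact Set.infinite_univ.mono fun n _ => hk.trans (one_le_degZ_pq_succ hirr n)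
    · exact Set.Infinite.of_image _ (hinf.mono (approxSet_subset_image_convergent hirr hk.le))
  · intro hinf
    refine (hinf.image (convergent_injective hirr).injOn).mono ?_
    rintro _ ⟨n, hn, rfl⟩
    exact convergent_mem_approxSet hirr hn

end LagrangeConstant

/-- For irrational `α ∈ ℚ((1/T))` (with bounded partial quotient degrees, so that
the Lagrange constant is finite), the greatest integer `k` such that
`deg (α - p/q) ≤ -2 deg q - k` holds for infinitely many rational functions `p/q`
equals `limsup_{h → ∞} deg a_h`, where the `a_h` are the partial quotients of `α`. -/
theorem lagrange_constant_eq_limsup (α : QLaurent) (hirr : α ∉ Set.range ratToL)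
    (hbdd : BddAbove (Set.range fun h : ℕ => degZ (pq α h))) :
    IsGreatest
      {k : ℤ | {r : RatFunc ℚ |
        degL (α - ratToL r) ≤ ((-2 * (r.denom.natDegree : ℤ) - k : ℤ) : WithBot ℤ)}.Infinite}
      (Filter.atTop.limsup fun h : ℕ => degZ (pq α h)) := by
  have hcobdd : atTop.IsCoboundedUnder (· ≤ ·) fun h : ℕ => degZ (pq α h) := by
    refine isCoboundedUnder_le_of_eventually_le atTop (x := 1) ?_
    rw [← map_add_atTop_eq_nat 1, eventually_map]
    exact Eventually.of_forall (one_le_degZ_pq_succ hirr)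
  convert Int.isGreatest_frequently_le_limsup hcobdd hbdd.isBoundedUnder_of_range using 1
  ext k
  exact approxSet_infinite_iff hirr k

end
end

section
/- For each positive integer d and each integer l with 0 ≤ l < d, the Laurent series √(T^{2d} + T^l) ∈ Q((1/T)) has continued fraction expansion [T^d; 2T^{d-l}, 2T^d, 2T^{d-l}, 2T^d, ...], so its partial quotients a_h satisfy deg a_h = d for h even and deg a_h = d - l for h odd; consequently its Lagrange constant is d. -/
noncomputable section
open scoped Classical

/-! Write `α = T^d + β`. Then `α² = T^{2d} + T^l` reads `β (2T^d + β) = T^l`, so `β` has degree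
`l - d < 0` and `⌊α⌋ = T^d`. The same identity gives `1/β = 2T^{d-l} + T^{-l}β` and
`1/(T^{-l}β) = 2T^d + β`, where `T^{-l}β` has degree `-d < 0`; so the complete quotients
alternate between these two series from index `1` on. -/

open HahnSeries

theorem limsup_eq_of_forall_le_of_frequently_eq {ι α : Type*} [ConditionallyCompleteLinearOrder α]
    {f : Filter ι} {u : ι → α} {b : α} (hle : ∀ i, u i ≤ b) (hfreq : ∃ᶠ i in f, u i = b) :
    f.limsup u = b :=
  have hfreq' : ∃ᶠ i in f, b ≤ u i := hfreq.mono fun _ h => h.ge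
  le_antisymm (Filter.limsup_le_of_le (Filter.IsCoboundedUnder.of_frequently_ge hfreq')
      (Filter.Eventually.of_forall hle))
    (Filter.le_limsup_of_frequently_le hfreq' (Filter.isBoundedUnder_of ⟨b, hle⟩))

section LaurentSeries

variable {K : Type*} [Field K]

theorem LaurentSeries.inv_eq_single_mul_of_mul_eq_single {x y : LaurentSeries K} {n : ℤ}
    (h : x * y = single (-n) 1) : x⁻¹ = single n 1 * y :=
  inv_eq_of_mul_eq_one_right <| by
    rw [mul_left_comm, h, single_mul_single, add_neg_cancel, mul_one, single_zero_one]

theorem LaurentSeries.inv_single_mul_eq_of_mul_eq_single {x y : LaurentSeries K} {n : ℤ}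
    (h : x * y = single (-n) 1) : (single n 1 * x)⁻¹ = y :=
  inv_eq_of_mul_eq_one_right <| by
    rw [mul_assoc, h, single_mul_single, add_neg_cancel, mul_one, single_zero_one]

theorem LaurentSeries.orderTop_eq_of_sq_eq_single_add {x y : LaurentSeries K} {a : ℤ} {c : K}
    (hc : c ≠ 0) (hy : ((2 * a : ℤ) : WithTop ℤ) < y.orderTop)
    (h : x ^ 2 = single (2 * a) c + y) : x.orderTop = a := by
  have hsq : x.orderTop + x.orderTop = ((2 * a : ℤ) : WithTop ℤ) := by
    rw [← orderTop_mul, ← sq, h, orderTop_add_eq_left (by rwa [orderTop_single hc]),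
      orderTop_single hc]
  have hx : x ≠ 0 := by
    rintro rfl
    simp only [orderTop_zero, WithTop.top_add] at hsq
    exact WithTop.top_ne_coe hsq
  rw [← order_eq_orderTop_of_ne_zero hx] at hsq ⊢
  norm_cast at hsq ⊢
  omega

theorem LaurentSeries.orderTop_sub_single_of_sq_eq [NeZero (2 : K)] {α : LaurentSeries K} {a b : ℤ}
    (hab : 2 * a < b)     (hsq : α ^ 2 = single (2 * a) 1 + single b 1) (hlead : α.coeff a = 1) :
    (α - single a 1) * (single a 2 + (α - single a 1)) = single b 1 ∧
      (α - single a 1).orderTop = ((b - a : ℤ) : WithTop ℤ) := by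
  have hα : α.orderTop = a :=
    orderTop_eq_of_sq_eq_single_add one_ne_zero
      (by rwa [orderTop_single one_ne_zero, WithTop.coe_lt_coe]) hsq
  have hαne : α ≠ 0 := by rintro rfl; simp at hα
  have hmul : (α - single a 1) * (single a 2 + (α - single a 1)) = single b 1 := by
    have : single a (1 : K) * single a 1 = single (2 * a) 1 := by
      rw [single_mul_single, two_mul, mul_one]
    have two : single a (2 : K) = 2 * single a 1 := by
      rw [← single_zero_ofNat, single_mul_single, zero_add, mul_one]
    rw [two]
    linear_combination hsq - this
  have hlt : (a : WithTop ℤ) < (α - single a 1).orderTop :=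
    le_orderTop_of_leadingCoeff_eq hα (orderTop_single one_ne_zero) (by
      have : α.order = a := WithTop.coe_injective ((order_eq_orderTop_of_ne_zero hαne).trans hα)
      rw [leadingCoeff_eq, leadingCoeff_eq, order_single one_ne_zero, coeff_single_same, this,
        hlead])
  refine ⟨hmul, ?_⟩
  have := congrArg orderTop hmul
  rw [orderTop_mul, orderTop_add_eq_left (by rwa [orderTop_single two_ne_zero]),
    orderTop_single two_ne_zero, orderTop_single one_ne_zero] at this
  cases h : (α - single a 1).orderTop with
  | top => simp [h] at this
  | coe o =>
    rw [h] at this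
    norm_cast at this ⊢
    omega

end LaurentSeries

theorem polyToL_X_pow (k : ℕ) : polyToL (Polynomial.X ^ k) = single (-(k : ℤ)) 1 := by
  rw [polyToL, map_pow, Polynomial.aeval_X, single_pow, one_pow, nsmul_eq_mul, mul_neg, mul_one]

theorem polyToL_two_mul_X_pow (k : ℕ) :
    polyToL (2 * Polynomial.X ^ k) = single (-(k : ℤ)) 2 := by
  rw [map_mul, polyToL_X_pow, map_ofNat, ← single_zero_ofNat, single_mul_single, zero_add, mul_one]

theorem degZ_single {a : ℤ} {c : ℚ} (hc : c ≠ 0) : degZ (single a c) = -a := by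
  rw [degZ, order_single hc]

theorem polyPart_single_add {a : ℤ} (ha : a ≤ 0) (c : ℚ) {x : QLaurent}
    (hx : 0 < x.orderTop) : polyPart (single a c + x) = single a c := by
  ext n
  simp only [polyPart, coeff_add]
  split_ifs with hn
  · rw [coeff_eq_zero_of_lt_orderTop ((WithTop.coe_le_coe.2 hn).trans_lt hx), add_zero]
  · rw [coeff_single_of_ne (by omega)]

theorem fracPart_single_add {a : ℤ} (ha : a ≤ 0) (c : ℚ) {x : QLaurent}
    (hx : 0 < x.orderTop) : fracPart (single a c + x) = x := by
  rw [fracPart, polyPart_single_add ha c hx, add_sub_cancel_left]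

theorem pq_of_cfA_eq_single_add {α x : QLaurent} {n : ℕ} {a : ℤ} {c : ℚ} (ha : a ≤ 0)
    (hx : 0 < x.orderTop) (h : cfA α n = single a c + x) : pq α n = single a c := by
  rw [pq, h, polyPart_single_add ha c hx]

theorem cfA_succ_of_eq_single_add {α x : QLaurent} {n : ℕ} {a : ℤ} {c : ℚ} (ha : a ≤ 0)
    (hx : 0 < x.orderTop) (h : cfA α n = single a c + x) : cfA α (n + 1) = x⁻¹ := by
  rw [cfA, h, fracPart_single_add ha c hx]

theorem cfA_add (α : QLaurent) (m n : ℕ) : cfA α (n + m) = cfA (cfA α m) n := by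
  induction n with
  | zero => rw [zero_add, cfA]
  | succ n ih => rw [Nat.add_right_comm, cfA, ih, cfA]

theorem cfA_add_mul_of_eq {α : QLaurent} {k p : ℕ} (h : cfA α (k + p) = cfA α k) (m n : ℕ) :
    cfA α (n + (k + p * m)) = cfA α (n + k) := by
  have hm : cfA α (k + p * m) = cfA α k := by
    induction m with
    | zero => rw [mul_zero, add_zero]
    | succ m ih => rw [mul_add_one, ← add_assoc, add_comm, cfA_add, ih, ← cfA_add, add_comm, h]
  rw [cfA_add, hm, ← cfA_add]

theorem pq_of_sq_eq_single_add_single {α : QLaurent} {a b : ℤ} (ha : a < 0) (hab : a < b)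
    (hsq : α ^ 2 = single (2 * a) 1 + single b 1) (hlead : α.coeff a = 1) :
    pq α 0 = single a 1 ∧
      ∀ n : ℕ, pq α (2 * n + 1) = single (a - b) 2 ∧ pq α (2 * n + 2) = single a 2 := by
  set β := α - single a 1
  obtain ⟨hmul, hβ⟩ := LaurentSeries.orderTop_sub_single_of_sq_eq (by omega) hsq hlead
  have hβpos : 0 < β.orderTop := by
    rw [hβ]
    exact_mod_cast sub_pos.2 hab
  have hγpos : 0 < (single (-b) 1 * β).orderTop := by
    rw [orderTop_mul, orderTop_single one_ne_zero, hβ]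
    exact_mod_cast (by omega : 0 < -b + (b - a))
  have h0 : cfA α 0 = single a 1 + β := (add_sub_cancel _ _).symm
  have hinv : β⁻¹ = single (a - b) 2 + single (-b) 1 * β := by
    rw [LaurentSeries.inv_eq_single_mul_of_mul_eq_single (n := -b) (by rwa [neg_neg]), mul_add,
      single_mul_single, one_mul, neg_add_eq_sub]
  have h1 : cfA α 1 = single (a - b) 2 + single (-b) 1 * β := by
    rw [cfA_succ_of_eq_single_add ha.le hβpos h0, hinv]
  have h2 : cfA α 2 = single a 2 + β :=
    (cfA_succ_of_eq_single_add (by omega) hγpos h1).trans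
      (LaurentSeries.inv_single_mul_eq_of_mul_eq_single (by rwa [neg_neg]))
  have h3 : cfA α (1 + 2) = cfA α 1 := by
    rw [cfA_succ_of_eq_single_add ha.le hβpos h2, hinv, h1]
  refine ⟨pq_of_cfA_eq_single_add ha.le hβpos h0, fun n => ⟨?_, ?_⟩⟩
  · rw [pq, show 2 * n + 1 = 0 + (1 + 2 * n) by ring, cfA_add_mul_of_eq h3, zero_add, ← pq]
    exact pq_of_cfA_eq_single_add (by omega) hγpos h1
  · rw [pq, show 2 * n + 2 = 1 + (1 + 2 * n) by ring, cfA_add_mul_of_eq h3, ← pq]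
    exact pq_of_cfA_eq_single_add ha.le hβpos h2

theorem sqrt_Tpow_cf_general (d l : ℕ) (hl : l < d) (α : QLaurent)
    (hsq : α ^ 2 = polyToL (Polynomial.X ^ (2 * d) + Polynomial.X ^ l))
    (hlead : α.coeff (-(d : ℤ)) = 1) :
    pq α 0 = polyToL (Polynomial.X ^ d) ∧
    (∀ n : ℕ, pq α (2 * n + 1) = polyToL (2 * Polynomial.X ^ (d - l)) ∧
      pq α (2 * n + 2) = polyToL (2 * Polynomial.X ^ d)) ∧
    (∀ h : ℕ, degZ (pq α h) = if Even h then (d : ℤ) else (d : ℤ) - (l : ℤ)) ∧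
    (Filter.atTop.limsup fun h : ℕ => degZ (pq α h)) = (d : ℤ) := by
  have hsq' : α ^ 2 = single (2 * -(d : ℤ)) 1 + single (-(l : ℤ)) 1 := by
    rw [hsq, map_add, polyToL_X_pow, polyToL_X_pow]
    push_cast
    ring_nf
  obtain ⟨hpq0, hpq⟩ := pq_of_sq_eq_single_add_single (by omega) (by omega) hsq' hlead
  rw [sub_neg_eq_add, neg_add_eq_sub] at hpq
  have hdeg : ∀ h : ℕ, degZ (pq α h) = if Even h then (d : ℤ) else (d : ℤ) - (l : ℤ) := by
    intro h
    obtain ⟨n, rfl | rfl⟩ := Nat.even_or_odd' h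
    · cases n with
      | zero => simp [hpq0, degZ_single]
      | succ n => simp [mul_add, (hpq n).2, degZ_single, parity_simps]
    · simp [(hpq n).1, degZ_single]
  refine ⟨by rw [hpq0, polyToL_X_pow], fun n => ?_, hdeg,
    limsup_eq_of_forall_le_of_frequently_eq (fun h => ?_) ?_⟩
  · rw [polyToL_two_mul_X_pow, polyToL_two_mul_X_pow, Nat.cast_sub hl.le, neg_sub]
    exact hpq n
  · rw [hdeg]
    split_ifs <;> omega
  · exact Filter.frequently_atTop.2 fun n => ⟨2 * n, by omega, by simp [hdeg]⟩

/-- For `0 ≤ l < d`, the square root `α` of `T^{2d} + T^l` in `ℚ((1/T))` (with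
leading term `T^d`) has continued fraction `[T^d; 2T^{d-l}, 2T^d, 2T^{d-l}, …]`;
its partial quotients `a_h` satisfy `deg a_h = d` for even `h` and
`deg a_h = d - l` for odd `h`, and its Lagrange constant
`limsup_h deg a_h` equals `d`. -/
theorem sqrt_Tpow_cf (d l : ℕ) (hd : 0 < d) (hl : l < d) (α : QLaurent)
    (hsq : α ^ 2 = polyToL (Polynomial.X ^ (2 * d) + Polynomial.X ^ l))
    (hlead : α.coeff (-(d : ℤ)) = 1) :
    pq α 0 = polyToL (Polynomial.X ^ d) ∧
    (∀ n : ℕ, pq α (2 * n + 1) = polyToL (2 * Polynomial.X ^ (d - l)) ∧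
      pq α (2 * n + 2) = polyToL (2 * Polynomial.X ^ d)) ∧
    (∀ h : ℕ, degZ (pq α h) = if Even h then (d : ℤ) else (d : ℤ) - (l : ℤ)) ∧
    (Filter.atTop.limsup fun h : ℕ => degZ (pq α h)) = (d : ℤ) :=
  sqrt_Tpow_cf_general d l hl α hsq hlead

end
end
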